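/- Kantorovich's inequality: for a symmetric positive definite matrix A with smallest eigenvalue λ_min and largest eigenvalue λ_max, and any nonzero vector x, (xᵀx)² / ((xᵀAx)(xᵀA⁻¹x)) ≥ 4 λ_min λ_max / (λ_min + λ_max)². -/

import Mathlib

/-!
With `m = λ_min` and `M = λ_max`, every point `t` of the spectrum satisfies
`(t - m) (M - t) ≥ 0`, i.e. `t + m M t⁻¹ ≤ m + M`. By the functional calculus this gives the
operator inequality `A + m M A⁻¹ ≤ (m + M) I`, hence `xᵀAx + m M xᵀA⁻¹x ≤ (m + M) xᵀx`.
AM-GM applied to the left-hand side bounds `4 m M (xᵀAx)(xᵀA⁻¹x)` by `(m + M)² (xᵀx)²`.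
-/

open Matrix

section ContinuousFunctionalCalculus

variable {A : Type*} [Ring A] [StarRing A] [Algebra ℝ A] [TopologicalSpace A] [PartialOrder A]
  [StarOrderedRing A] [ContinuousFunctionalCalculus ℝ A IsSelfAdjoint]

lemma add_smul_ringInverse_le_of_spectrum_subset_Icc {a : A} (ha : IsSelfAdjoint a) {m M : ℝ}
    (hm : 0 < m) (hspec : spectrum ℝ a ⊆ Set.Icc m M) :
    a + (m * M) • Ring.inverse a ≤ algebraMap ℝ A (m + M) := by
  have hpos : ∀ t ∈ spectrum ℝ a, 0 < t := fun t ht => hm.trans_le (hspec ht).1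
  have hunit : IsUnit a := spectrum.isUnit_of_zero_notMem ℝ fun h0 => (hpos 0 h0).false
  have hinv : ContinuousOn (·⁻¹ : ℝ → ℝ) (spectrum ℝ a) :=
    continuousOn_inv₀.mono fun t ht => (hpos t ht).ne'
  have hcfc : cfc (fun t : ℝ => t + m * M * t⁻¹) a = a + (m * M) • Ring.inverse a := by
    rw [cfc_add .., cfc_const_mul .., cfc_id' ℝ a, cfc_ringInverse_id (R := ℝ) a hunit]
  rw [← hcfc, ← cfc_const (m + M) a]
  refine cfc_mono fun t ht => ?_
  obtain ⟨hmt, htM⟩ := hspec ht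
  have hfactor : m + M - (t + m * M * t⁻¹) = (t - m) * (M - t) / t := by
    field_simp [(hpos t ht).ne']
    ring
  rw [← sub_nonneg, hfactor]
  exact div_nonneg (mul_nonneg (sub_nonneg.2 hmt) (sub_nonneg.2 htM)) (hpos t ht).le

end ContinuousFunctionalCalculus

open scoped MatrixOrder in
lemma Matrix.IsHermitian.dotProduct_mulVec_add_mul_dotProduct_inv_mulVec_le {n : Type*}
    [Fintype n] [DecidableEq n] {A : Matrix n n ℝ} (hA : A.IsHermitian) {m M : ℝ} (hm : 0 < m)
    (hbounds : ∀ i, hA.eigenvalues i ∈ Set.Icc m M) (x : n → ℝ) :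
    x ⬝ᵥ (A *ᵥ x) + m * M * (x ⬝ᵥ (A⁻¹ *ᵥ x)) ≤ (m + M) * (x ⬝ᵥ x) := by
  have hspec : spectrum ℝ A ⊆ Set.Icc m M := by
    rw [hA.spectrum_real_eq_range_eigenvalues]
    exact Set.range_subset_iff.2 hbounds
  have hle := add_smul_ringInverse_le_of_spectrum_subset_Icc (A := Matrix n n ℝ) hA hm hspec
  rw [← nonsing_inv_eq_ringInverse, le_iff] at hle
  simpa only [star_trivial, Algebra.algebraMap_eq_smul_one, sub_mulVec, add_mulVec, smul_mulVec,
    one_mulVec, dotProduct_sub, dotProduct_add, dotProduct_smul, smul_eq_mul, sub_nonneg]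
    using hle.dotProduct_mulVec_nonneg x

lemma four_mul_mul_le_sq_of_add_mul_le {a b k c : ℝ} (ha : 0 ≤ a) (hkb : 0 ≤ k * b)
    (h : a + k * b ≤ c) : 4 * k * (a * b) ≤ c ^ 2 :=
  calc 4 * k * (a * b) = 4 * a * (k * b) := by ring
    _ ≤ (a + k * b) ^ 2 := four_mul_le_sq_add a (k * b)
    _ ≤ c ^ 2 := pow_le_pow_left₀ (add_nonneg ha hkb) h 2

theorem stmt_5 {d : ℕ} (A : Matrix (Fin d) (Fin d) ℝ)
    (hA : A.IsHermitian) (hpd : A.PosDef)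
    (lmin lmax : ℝ)
    (hmin : IsLeast (Set.range hA.eigenvalues) lmin)
    (hmax : IsGreatest (Set.range hA.eigenvalues) lmax)
    (x : Fin d → ℝ) (hx : x ≠ 0) :
    (dotProduct x x) ^ 2 /
      ((dotProduct x (A.mulVec x)) * (dotProduct x (A⁻¹.mulVec x))) ≥
      4 * lmin * lmax / (lmin + lmax) ^ 2 := by
  obtain ⟨i, hi⟩ := hmin.1
  have hlmin : 0 < lmin := hi ▸ hpd.eigenvalues_pos i
  have hlmax : 0 < lmax := hlmin.trans_le (hmin.2 hmax.1)
  have hquad : 0 < x ⬝ᵥ (A *ᵥ x) := by simpa using hpd.dotProduct_mulVec_pos hx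
  have hquad_inv : 0 < x ⬝ᵥ (A⁻¹ *ᵥ x) := by simpa using hpd.inv.dotProduct_mulVec_pos hx
  have hsum := hA.dotProduct_mulVec_add_mul_dotProduct_inv_mulVec_le hlmin
    (fun j => ⟨hmin.2 ⟨j, rfl⟩, hmax.2 ⟨j, rfl⟩⟩) x
  rw [ge_iff_le, div_le_div_iff₀ (by positivity) (by positivity)]
  linear_combination four_mul_mul_le_sq_of_add_mul_le hquad.le (by positivity) hsum
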